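/- Let K be an odd positive integer, ε ≥ 0, and let m be an integer with 1 ≤ m ≤ (K−1)/2. Define h(l) = (1/C(K,2m−1)) · Σ_{i=m}^{2m−1} C(l,i)·C(K−l, 2m−1−i) for l ∈ {0,…,K}, and define γ(l) = 1 − 2h(l) for l ≤ (K−1)/2 and γ(l) = 2h(l) − 1 for l ≥ (K+1)/2. Then for every (p, p') ∈ F(ε,0): Σ_{l=0}^{(K−1)/2} ( e^{mε} b(l;K,p') − b(l;K,p) ) γ(l) + Σ_{l=(K+1)/2}^{K} ( b(l;K,p) − e^{mε} b(l;K,p') ) γ(l) ≤ e^{mε} − 1. (Hence DaRRM with this γ, which is equivalent to outputting the majority of 2m−1 outcomes subsampled without replacement from K i.i.d. (ε,0)-differentially-private mechanisms, is mε-differentially private — a privacy amplification by a factor of 2 over subsampling m mechanisms.) -/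

import Mathlib

/-!
Splitting the objective according to the two formulas for `γ` turns it into
`e^{mε} - 1 + 2 (G(p) - e^{mε} G(p'))` with `G(q) = ∑ₗ b(l;K,q) h(l)`. Drawing `2m-1` of `K`
i.i.d. Bernoulli(q) votes without replacement gives `2m-1` i.i.d. Bernoulli(q) votes, so `G(q)` is
the upper tail `P[Bin(2m-1,q) ≥ m]`, whose derivative is `(2m-1) b(m-1;2m-2,q)`, a multiple of
`q^{m-1}(1-q)^{m-1}`. Hence for `β ≥ 1` the map `s ↦ β^m G(s) - G(βs)` is nondecreasing while
`βs ≤ 1`, i.e. `G(βs) ≤ β^m G(s)`. Taking `β = p/p' ≤ e^ε` (or using that `G` is monotone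
when `p ≤ p'`) gives `G(p) ≤ e^{mε} G(p')`, which is the claim.
-/

open Finset

/-- Binomial(K,p) probability mass at `l`. -/
noncomputable def binomPMF (K : ℕ) (p : ℝ) (l : ℕ) : ℝ :=
  (K.choose l : ℝ) * p ^ l * (1 - p) ^ (K - l)

/-- The feasible region `F(ε,0)`: pairs `(p,p') ∈ [0,1]²` consistent with pure
`ε`-differential privacy. -/
def Feas0 (ε p p' : ℝ) : Prop :=
  0 ≤ p ∧ p ≤ 1 ∧ 0 ≤ p' ∧ p' ≤ 1 ∧
  p ≤ Real.exp ε * p' ∧ p' ≤ Real.exp ε * p ∧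
  1 - p ≤ Real.exp ε * (1 - p') ∧ 1 - p' ≤ Real.exp ε * (1 - p)

theorem sum_binomPMF (K : ℕ) (p : ℝ) : ∑ l ∈ range (K + 1), binomPMF K p l = 1 := by
  have h := (add_pow p (1 - p) K).symm
  rw [add_sub_cancel, one_pow] at h
  rw [← h]
  exact sum_congr rfl fun l _ => by unfold binomPMF; ring

theorem choose_mul_choose_comm (N a b : ℕ) :
    N.choose a * (N - a).choose b = N.choose b * (N - b).choose a := by
  have ha := Nat.choose_mul (n := N) (Nat.le_add_right a b)
  have hb := Nat.choose_mul (n := N) (Nat.le_add_left b a)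
  rw [Nat.add_sub_cancel_left] at ha
  rw [Nat.add_sub_cancel] at hb
  rw [← ha, ← hb, Nat.choose_symm_add]

theorem choose_add_mul_choose_mul_choose {K n i j : ℕ} (hin : i ≤ n) :
    K.choose (i + j) * (i + j).choose i * (K - (i + j)).choose (n - i)
      = K.choose n * n.choose i * (K - n).choose j := by
  rw [Nat.choose_mul (Nat.le_add_right i j), Nat.choose_mul hin, Nat.add_sub_cancel_left,
    mul_assoc, mul_assoc, ← Nat.sub_sub, choose_mul_choose_comm,
    Nat.sub_sub, Nat.add_sub_cancel' hin]

theorem sum_binomPMF_mul_choose_mul_choose {K n i : ℕ} (hin : i ≤ n) (hnK : n ≤ K) (q : ℝ) :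
    ∑ l ∈ range (K + 1), binomPMF K q l * ((l.choose i : ℝ) * ((K - l).choose (n - i) : ℝ))
      = K.choose n * binomPMF n q i := by
  have hsupp : Ico i (i + (K - n + 1)) ⊆ range (K + 1) := by
    intro l hl
    rw [mem_Ico] at hl
    rw [mem_range]
    omega
  have hzero : ∀ l ∈ range (K + 1), l ∉ Ico i (i + (K - n + 1)) →
      binomPMF K q l * ((l.choose i : ℝ) * ((K - l).choose (n - i) : ℝ)) = 0 := by
    intro l hlK hl
    rw [mem_range] at hlK
    rw [mem_Ico] at hl
    rcases lt_or_ge l i with hli | hil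
    · simp [Nat.choose_eq_zero_of_lt hli]
    · have : K - l < n - i := by omega
      simp [Nat.choose_eq_zero_of_lt this]
  have hterm : ∀ j ∈ range (K - n + 1),
      binomPMF K q (i + j) * (((i + j).choose i : ℝ) * ((K - (i + j)).choose (n - i) : ℝ))
        = K.choose n * binomPMF n q i * binomPMF (K - n) q j := by
    intro j hj
    have hjK : j ≤ K - n := Nat.lt_succ_iff.mp (mem_range.mp hj)
    have hchoose := congrArg (Nat.cast (R := ℝ))
      (choose_add_mul_choose_mul_choose (K := K) (j := j) hin)
    push_cast at hchoose
    have hexp : (1 - q) ^ (K - (i + j)) = (1 - q) ^ (n - i) * (1 - q) ^ (K - n - j) := by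
      rw [← pow_add]; congr 1; omega
    unfold binomPMF
    rw [hexp, pow_add]
    linear_combination q ^ i * q ^ j * ((1 - q) ^ (n - i) * (1 - q) ^ (K - n - j)) * hchoose
  rw [← sum_subset hsupp hzero, sum_Ico_eq_sum_range, Nat.add_sub_cancel_left,
    sum_congr rfl hterm, ← mul_sum, sum_binomPMF, mul_one]

noncomputable def hypergeomTail (K n m l : ℕ) : ℝ :=
  (∑ i ∈ Icc m n, (l.choose i : ℝ) * ((K - l).choose (n - i) : ℝ)) / (K.choose n : ℝ)

noncomputable def binomTail (n m : ℕ) (q : ℝ) : ℝ :=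
  ∑ i ∈ Icc m n, binomPMF n q i

theorem sum_binomPMF_mul_hypergeomTail {K n : ℕ} (m : ℕ) (hnK : n ≤ K) (q : ℝ) :
    ∑ l ∈ range (K + 1), binomPMF K q l * hypergeomTail K n m l = binomTail n m q := by
  have hK : (K.choose n : ℝ) ≠ 0 := by exact_mod_cast (Nat.choose_pos hnK).ne'
  simp only [hypergeomTail, binomTail, mul_div_assoc', ← sum_div, mul_sum]
  rw [sum_comm, sum_congr rfl fun i hi =>
    sum_binomPMF_mul_choose_mul_choose (mem_Icc.mp hi).2 hnK q, ← mul_sum,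
    mul_div_cancel_left₀ _ hK]

theorem hasDerivAt_binomPMF_succ (n i : ℕ) (q : ℝ) :
    HasDerivAt (fun x => binomPMF (n + 1) x (i + 1))
      ((n + 1) * (binomPMF n q i - binomPMF n q (i + 1))) q := by
  have hlow : ((n + 1) * n.choose i : ℝ) = (n + 1).choose (i + 1) * (i + 1) := by
    exact_mod_cast Nat.add_one_mul_choose_eq n i
  have hhigh : (n.choose (i + 1) * (n + 1) : ℝ) = (n + 1).choose (i + 1) * (n - i : ℕ) := by
    have := Nat.choose_mul_succ_eq n (i + 1)
    rw [Nat.add_sub_add_right] at this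
    exact_mod_cast this
  have hfirst : HasDerivAt (fun x : ℝ => x ^ (i + 1)) ((i + 1) * q ^ i) q := by
    simpa using hasDerivAt_pow (i + 1) q
  have hsecond : HasDerivAt (fun x : ℝ => (1 - x) ^ (n - i))
      (-((n - i : ℕ) * (1 - q) ^ (n - (i + 1)))) q := by
    have h := (hasDerivAt_pow (n - i) (1 - q)).comp q ((hasDerivAt_id' q).const_sub 1)
    simp only [Nat.sub_sub, mul_neg, mul_one] at h
    exact h
  unfold binomPMF
  simp only [Nat.add_sub_add_right]
  refine ((hfirst.const_mul ((n + 1).choose (i + 1) : ℝ)).fun_mul hsecond).congr_deriv ?_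
  linear_combination
    q ^ (i + 1) * (1 - q) ^ (n - (i + 1)) * hhigh - q ^ i * (1 - q) ^ (n - i) * hlow

theorem hasDerivAt_binomTail {n m : ℕ} (hmn : m ≤ n) (q : ℝ) :
    HasDerivAt (binomTail (n + 1) (m + 1)) ((n + 1) * binomPMF n q m) q := by
  have hshift :
      binomTail (n + 1) (m + 1) = fun x => ∑ i ∈ Icc m n, binomPMF (n + 1) x (i + 1) := by
    funext x
    rw [binomTail, ← map_add_right_Icc, sum_map]
    rfl
  have htel : ∑ i ∈ Icc m n, (n + 1) * (binomPMF n q i - binomPMF n q (i + 1))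
      = (n + 1) * binomPMF n q m := by
    have hvanish : binomPMF n q (n + 1) = 0 := by simp [binomPMF]
    have hsum := sum_Icc_sub hmn (binomPMF n q)
    rw [sum_sub_distrib] at hsum
    rw [← mul_sum, sum_sub_distrib]
    linear_combination (-(n + 1 : ℝ)) * hsum - (n + 1 : ℝ) * hvanish
  rw [hshift, ← htel]
  exact HasDerivAt.fun_sum fun i _ => hasDerivAt_binomPMF_succ n i q

theorem binomPMF_nonneg {n : ℕ} {q : ℝ} (hq0 : 0 ≤ q) (hq1 : q ≤ 1) (i : ℕ) :
    0 ≤ binomPMF n q i := by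
  have := sub_nonneg.mpr hq1
  unfold binomPMF
  positivity

theorem binomTail_nonneg {n m : ℕ} {q : ℝ} (hq0 : 0 ≤ q) (hq1 : q ≤ 1) : 0 ≤ binomTail n m q :=
  sum_nonneg fun i _ => binomPMF_nonneg hq0 hq1 i

theorem binomTail_zero_of_pos {n m : ℕ} (hm : 0 < m) : binomTail n m 0 = 0 :=
  sum_eq_zero fun i hi => by
    simp [binomPMF, zero_pow (show i ≠ 0 by have := (mem_Icc.mp hi).1; omega)]

theorem binomTail_monotoneOn {n m : ℕ} (hmn : m ≤ n) :
    MonotoneOn (binomTail (n + 1) (m + 1)) (Set.Icc 0 1) := by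
  refine monotoneOn_of_hasDerivWithinAt_nonneg (convex_Icc 0 1)
    (fun x _ => (hasDerivAt_binomTail hmn x).continuousAt.continuousWithinAt)
    (fun x _ => (hasDerivAt_binomTail hmn x).hasDerivWithinAt) fun x hx => ?_
  rw [interior_Icc] at hx
  exact mul_nonneg (by positivity) (binomPMF_nonneg hx.1.le hx.2.le m)

theorem binomTail_mul_le_pow_mul (k : ℕ) {β s : ℝ} (hβ : 1 ≤ β) (hs : 0 ≤ s)
    (hβs : β * s ≤ 1) :
    binomTail (2 * k + 1) (k + 1) (β * s) ≤ β ^ (k + 1) * binomTail (2 * k + 1) (k + 1) s := by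
  set G := binomTail (2 * k + 1) (k + 1)
  have hG : ∀ x, HasDerivAt G ((2 * k + 1) * binomPMF (2 * k) x k) x := by
    intro x
    simpa using hasDerivAt_binomTail (n := 2 * k) (by omega) x
  have hderiv : ∀ t, HasDerivAt (fun t => β ^ (k + 1) * G t - G (β * t))
      (β ^ (k + 1) * ((2 * k + 1) * binomPMF (2 * k) t k)
        - (2 * k + 1) * binomPMF (2 * k) (β * t) k * β) t := by
    intro t
    have hscale : HasDerivAt (fun t => β * t) β t := by
      simpa using (hasDerivAt_id' t).const_mul β
    exact ((hG t).const_mul _).sub ((hG (β * t)).comp t hscale)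
  have hmono : MonotoneOn (fun t => β ^ (k + 1) * G t - G (β * t)) (Set.Icc 0 s) := by
    refine monotoneOn_of_hasDerivWithinAt_nonneg (convex_Icc 0 s)
      (fun t _ => (hderiv t).continuousAt.continuousWithinAt)
      (fun t _ => (hderiv t).hasDerivWithinAt) fun t ht => ?_
    rw [interior_Icc] at ht
    have hpmf : ∀ x, binomPMF (2 * k) x k = (2 * k).choose k * x ^ k * (1 - x) ^ k := by
      simp [binomPMF, two_mul]
    have hβt : (1 - β * t) ^ k ≤ (1 - t) ^ k :=
      pow_le_pow_left₀ (by nlinarith [ht.2]) (by nlinarith [ht.1]) k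
    rw [hpmf, hpmf, mul_pow]
    have ht0 := ht.1.le
    have hgap := sub_nonneg.mpr hβt
    convert (by positivity : 0 ≤ (2 * k + 1 : ℝ) * (2 * k).choose k * β ^ (k + 1) * t ^ k
      * ((1 - t) ^ k - (1 - β * t) ^ k)) using 1
    ring
  have h := hmono ⟨le_rfl, hs⟩ ⟨hs, le_rfl⟩ hs
  simp only [mul_zero, binomTail_zero_of_pos (Nat.succ_pos k), G, sub_zero] at h
  linarith

theorem binomTail_le_exp_mul (k : ℕ) {ε p p' : ℝ} (hε : 0 ≤ ε) (hp0 : 0 ≤ p) (hp1 : p ≤ 1)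
    (hp'0 : 0 ≤ p') (hp'1 : p' ≤ 1) (hpp' : p ≤ Real.exp ε * p') :
    binomTail (2 * k + 1) (k + 1) p
      ≤ Real.exp (((k + 1 : ℕ) : ℝ) * ε) * binomTail (2 * k + 1) (k + 1) p' := by
  have hG' := binomTail_nonneg (n := 2 * k + 1) (m := k + 1) hp'0 hp'1
  rcases le_or_gt p p' with hle | hlt
  · calc binomTail (2 * k + 1) (k + 1) p ≤ binomTail (2 * k + 1) (k + 1) p' :=
          binomTail_monotoneOn (by omega) ⟨hp0, hp1⟩ ⟨hp'0, hp'1⟩ hle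
      _ ≤ _ := le_mul_of_one_le_left hG' (Real.one_le_exp (by positivity))
  · have hp'pos : 0 < p' := lt_of_le_of_ne hp'0 (by rintro rfl; simp at hpp'; linarith)
    set β := p / p'
    have hβp : β * p' = p := div_mul_cancel₀ p hp'pos.ne'
    have hβ1 : 1 ≤ β := (one_le_div hp'pos).mpr hlt.le
    have hβε : β ≤ Real.exp ε := (div_le_iff₀ hp'pos).mpr hpp'
    calc binomTail (2 * k + 1) (k + 1) p
        = binomTail (2 * k + 1) (k + 1) (β * p') := by rw [hβp]
      _ ≤ β ^ (k + 1) * binomTail (2 * k + 1) (k + 1) p' :=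
          binomTail_mul_le_pow_mul k hβ1 hp'0 (hβp ▸ hp1)
      _ ≤ Real.exp ε ^ (k + 1) * binomTail (2 * k + 1) (k + 1) p' := by gcongr
      _ = _ := by rw [Real.exp_nat_mul]

theorem privacyCost_eq (K : ℕ) (E p p' : ℝ) (h γ : ℕ → ℝ)
    (hγlo : ∀ l, l ≤ (K - 1) / 2 → γ l = 1 - 2 * h l)
    (hγhi : ∀ l, (K + 1) / 2 ≤ l → γ l = 2 * h l - 1) :
    (∑ l ∈ range ((K + 1) / 2), (E * binomPMF K p' l - binomPMF K p l) * γ l)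
      + (∑ l ∈ Icc ((K + 1) / 2) K, (binomPMF K p l - E * binomPMF K p' l) * γ l)
      = E - 1 + 2 * (∑ l ∈ range (K + 1), binomPMF K p l * h l
          - E * ∑ l ∈ range (K + 1), binomPMF K p' l * h l) := by
  set term := fun l => E * binomPMF K p' l - binomPMF K p l
    + 2 * (binomPMF K p l * h l - E * (binomPMF K p' l * h l))
  have hlo : ∀ l ∈ range ((K + 1) / 2),
      (E * binomPMF K p' l - binomPMF K p l) * γ l = term l := by
    intro l hl
    rw [hγlo l (by rw [mem_range] at hl; omega)]
    ring
  have hhi : ∀ l ∈ Icc ((K + 1) / 2) K,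
      (binomPMF K p l - E * binomPMF K p' l) * γ l = term l := by
    intro l hl
    rw [hγhi l (mem_Icc.mp hl).1]
    ring
  rw [sum_congr rfl hlo, sum_congr rfl hhi, ← Ico_add_one_right_eq_Icc,
    sum_range_add_sum_Ico _ (by omega)]
  simp only [sum_add_distrib, sum_sub_distrib, ← mul_sum, sum_binomPMF]
  ring

theorem statement4 (K m : ℕ)
    (hm1 : 1 ≤ m) (hmK : m ≤ (K - 1) / 2) (ε : ℝ) (hε : 0 ≤ ε)
    (h γ : ℕ → ℝ)
    (hh : ∀ l, h l = (∑ i ∈ Finset.Icc m (2 * m - 1),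
        (l.choose i : ℝ) * ((K - l).choose (2 * m - 1 - i) : ℝ))
        / (K.choose (2 * m - 1) : ℝ))
    (hγlo : ∀ l, l ≤ (K - 1) / 2 → γ l = 1 - 2 * h l)
    (hγhi : ∀ l, (K + 1) / 2 ≤ l → γ l = 2 * h l - 1) :
    ∀ p p' : ℝ, Feas0 ε p p' →
      (∑ l ∈ Finset.range ((K + 1) / 2),
          (Real.exp ((m : ℝ) * ε) * binomPMF K p' l - binomPMF K p l) * γ l)
        + (∑ l ∈ Finset.Icc ((K + 1) / 2) K,
          (binomPMF K p l - Real.exp ((m : ℝ) * ε) * binomPMF K p' l) * γ l)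
        ≤ Real.exp ((m : ℝ) * ε) - 1 := by
  rintro p p' ⟨hp0, hp1, hp'0, hp'1, hpp', -⟩
  obtain ⟨k, rfl⟩ := Nat.exists_eq_add_of_le' hm1
  have hn : 2 * (k + 1) - 1 = 2 * k + 1 := by omega
  have hh' : h = hypergeomTail K (2 * k + 1) (k + 1) := funext fun l => by
    rw [hh l, hn]; rfl
  rw [privacyCost_eq K _ p p' h γ hγlo hγhi, hh',
    sum_binomPMF_mul_hypergeomTail _ (by omega), sum_binomPMF_mul_hypergeomTail _ (by omega)]
  linarith [binomTail_le_exp_mul k hε hp0 hp1 hp'0 hp'1 hpp']
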